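/- arXiv:2302.09128 — 5 statements merged into one kernel-verified Lean document; each statement's English description precedes it below -/
import Mathlib

section
/- Suppose ‖g − ∇φ(x)‖ ≤ κ α ‖g‖ for some κ > 0, and suppose 0 < α ≤ 2(1 − θ)σ_lb / ((2κ + L σ_ub) σ_ub) for some θ ∈ (0,1). Then φ(x − α d) ≤ φ(x) − α θ ⟨d, g⟩, where d := B⁻¹g. -/
/-!
By the descent lemma, a Lipschitz gradient gives
`φ (x - α • d) ≤ φ x - α ⟪∇φ x, d⟫ + L α² ‖d‖² / 2`, and replacing `∇φ x` by `g` costs at most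
`κ α² ‖g‖ ‖d‖`. In an eigenbasis of `B`, the map `B⁻¹` is diagonal with entries in `[σlb, σub]`,
so `⟪d, g⟫ ≥ σlb ‖g‖²` and `‖d‖ ≤ σub ‖g‖`; the step-size bound then makes the second-order
error at most `α (1 - θ) ⟪d, g⟫`.
-/

open scoped RealInnerProductSpace
open Matrix

section Descent

variable {E : Type*} [NormedAddCommGroup E] [InnerProductSpace ℝ E] [CompleteSpace E]
  {f : E → ℝ} {L : ℝ}

theorem Differentiable.hasDerivAt_comp_add_smul (hf : Differentiable ℝ f) (x v : E) (t : ℝ) :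
    HasDerivAt (fun s : ℝ => f (x + s • v)) ⟪gradient f (x + t • v), v⟫ t := by
  have hline : HasDerivAt (fun s : ℝ => x + s • v) v t := by
    simpa using ((hasDerivAt_id t).smul_const v).const_add x
  simpa only [Function.comp_def, InnerProductSpace.toDual_apply_apply] using
    (hf _).hasGradientAt.hasFDerivAt.comp_hasDerivAt t hline

theorem le_add_inner_gradient_add_of_lipschitz_gradient (hf : Differentiable ℝ f)
    (hlip : ∀ a b, ‖gradient f a - gradient f b‖ ≤ L * ‖a - b‖) (x v : E) :
    f (x + v) ≤ f x + ⟪gradient f x, v⟫ + L / 2 * ‖v‖ ^ 2 := by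
  have hderiv := hf.hasDerivAt_comp_add_smul x v
  have hquad : ∀ t : ℝ, HasDerivAt
      (fun s : ℝ => f x + s * ⟪gradient f x, v⟫ + L / 2 * ‖v‖ ^ 2 * s ^ 2)
      (⟪gradient f x, v⟫ + L * ‖v‖ ^ 2 * t) t := fun t =>
    ((((hasDerivAt_id' t).mul_const _).const_add _).add
      ((hasDerivAt_pow 2 t).const_mul _)).congr_deriv (by ring)
  have hbound : ∀ t ∈ Set.Ico (0 : ℝ) 1,
      ⟪gradient f (x + t • v), v⟫ ≤ ⟪gradient f x, v⟫ + L * ‖v‖ ^ 2 * t := by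
    rintro t ⟨ht, -⟩
    have hlip_t : ‖gradient f (x + t • v) - gradient f x‖ ≤ L * (t * ‖v‖) := by
      simpa [norm_smul, abs_of_nonneg ht] using hlip (x + t • v) x
    calc ⟪gradient f (x + t • v), v⟫
        = ⟪gradient f x, v⟫ + ⟪gradient f (x + t • v) - gradient f x, v⟫ := by
          rw [inner_sub_left]; ring
      _ ≤ ⟪gradient f x, v⟫ + ‖gradient f (x + t • v) - gradient f x‖ * ‖v‖ := by
          gcongr; exact real_inner_le_norm _ _
      _ ≤ ⟪gradient f x, v⟫ + L * (t * ‖v‖) * ‖v‖ := by gcongr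
      _ = ⟪gradient f x, v⟫ + L * ‖v‖ ^ 2 * t := by ring
  have := image_le_of_deriv_right_le_deriv_boundary
    (fun t _ => (hderiv t).continuousAt.continuousWithinAt)
    (fun t _ => (hderiv t).hasDerivWithinAt) (by simp)
    (fun t _ => (hquad t).continuousAt.continuousWithinAt)
    (fun t _ => (hquad t).hasDerivWithinAt) hbound (Set.right_mem_Icc.mpr zero_le_one)
  simpa using this

end Descent

namespace OrthonormalBasis

variable {ι : Type*} [Fintype ι]

section RCLike

variable {𝕜 E : Type*} [RCLike 𝕜] [NormedAddCommGroup E] [InnerProductSpace 𝕜 E]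

theorem repr_apply_of_apply_eq_smul (b : OrthonormalBasis ι 𝕜 E) {T : E →ₗ[𝕜] E} {μ : ι → 𝕜}
    (hT : ∀ i, T (b i) = μ i • b i) (v : E) (i : ι) :
    b.repr (T v) i = μ i * b.repr v i := by
  classical
  conv_lhs => rw [← b.sum_repr v]
  simp [map_sum, map_smul, hT, Finset.sum_apply, Pi.single_apply, mul_comm]

end RCLike

section Real

variable {E : Type*} [NormedAddCommGroup E] [InnerProductSpace ℝ E] (b : OrthonormalBasis ι ℝ E)
  {T : E →ₗ[ℝ] E} {μ : ι → ℝ}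

theorem inner_apply_self_eq_sum (hT : ∀ i, T (b i) = μ i • b i) (v : E) :
    ⟪T v, v⟫ = ∑ i, μ i * b.repr v i ^ 2 := by
  rw [← b.repr.inner_map_map, EuclideanSpace.inner_eq_star_dotProduct]
  simp only [dotProduct, b.repr_apply_of_apply_eq_smul hT, star_trivial]
  exact Finset.sum_congr rfl fun i _ => by ring

theorem norm_apply_sq_eq_sum (hT : ∀ i, T (b i) = μ i • b i) (v : E) :
    ‖T v‖ ^ 2 = ∑ i, (μ i * b.repr v i) ^ 2 := by
  rw [← b.repr.norm_map, EuclideanSpace.norm_sq_eq]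
  simp only [b.repr_apply_of_apply_eq_smul hT, Real.norm_eq_abs, sq_abs]

theorem mul_norm_sq_le_inner_apply_self (hT : ∀ i, T (b i) = μ i • b i) {a : ℝ}
    (ha : ∀ i, a ≤ μ i) (v : E) : a * ‖v‖ ^ 2 ≤ ⟪T v, v⟫ := by
  rw [b.inner_apply_self_eq_sum hT, ← b.repr.norm_map, EuclideanSpace.norm_sq_eq, Finset.mul_sum]
  refine Finset.sum_le_sum fun i _ => ?_
  rw [Real.norm_eq_abs, sq_abs]
  exact mul_le_mul_of_nonneg_right (ha i) (sq_nonneg _)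

theorem norm_apply_le (hT : ∀ i, T (b i) = μ i • b i) {c : ℝ} (hc : 0 ≤ c)
    (hμ : ∀ i, |μ i| ≤ c) (v : E) : ‖T v‖ ≤ c * ‖v‖ := by
  refine le_of_sq_le_sq ?_ (by positivity)
  rw [b.norm_apply_sq_eq_sum hT, mul_pow, ← b.repr.norm_map, EuclideanSpace.norm_sq_eq,
    Finset.mul_sum]
  gcongr with i
  rw [Real.norm_eq_abs, sq_abs, mul_pow]
  exact mul_le_mul_of_nonneg_right (sq_le_sq' (abs_le.mp (hμ i)).1 (abs_le.mp (hμ i)).2)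
    (sq_nonneg _)

end Real

end OrthonormalBasis

theorem Matrix.IsHermitian.toEuclideanLin_inv_eigenvectorBasis {n 𝕜 : Type*} [Fintype n]
    [DecidableEq n] [RCLike 𝕜] {B : Matrix n n 𝕜} (hB : B.IsHermitian) (hdet : IsUnit B.det)
    (j : n) :
    toEuclideanLin B⁻¹ (hB.eigenvectorBasis j) =
      (hB.eigenvalues j : 𝕜)⁻¹ • hB.eigenvectorBasis j := by
  have hfix : (hB.eigenvalues j : 𝕜) • toEuclideanLin B⁻¹ (hB.eigenvectorBasis j) =
      hB.eigenvectorBasis j := by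
    apply WithLp.ofLp_injective
    rw [WithLp.ofLp_smul, ofLp_toLpLin, toLin'_apply, ← mulVec_smul,
      ← RCLike.real_smul_eq_coe_smul, ← hB.mulVec_eigenvectorBasis, mulVec_mulVec,
      nonsing_inv_mul _ hdet, one_mulVec]
  have hne : (hB.eigenvalues j : 𝕜) ≠ 0 := by
    rintro hzero
    rw [hzero, zero_smul] at hfix
    exact hB.eigenvectorBasis.orthonormal.ne_zero j hfix.symm
  exact (eq_inv_smul_iff₀ hne).mpr hfix

namespace Matrix.IsHermitian

variable {n : Type*} [Fintype n] [DecidableEq n] {B : Matrix n n ℝ} (hB : B.IsHermitian)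

theorem inv_mul_norm_sq_le_inner_toEuclideanLin_inv (hdet : IsUnit B.det)
    (hpos : ∀ i, 0 < hB.eigenvalues i) {M : ℝ} (hM : ∀ i, hB.eigenvalues i ≤ M)
    (v : EuclideanSpace ℝ n) : M⁻¹ * ‖v‖ ^ 2 ≤ ⟪toEuclideanLin B⁻¹ v, v⟫ :=
  hB.eigenvectorBasis.mul_norm_sq_le_inner_apply_self
    (hB.toEuclideanLin_inv_eigenvectorBasis hdet) (fun i => inv_anti₀ (hpos i) (hM i)) v

theorem norm_toEuclideanLin_inv_le (hdet : IsUnit B.det) {m : ℝ} (hm : 0 < m)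
    (hle : ∀ i, m ≤ hB.eigenvalues i) (v : EuclideanSpace ℝ n) :
    ‖toEuclideanLin B⁻¹ v‖ ≤ m⁻¹ * ‖v‖ :=
  hB.eigenvectorBasis.norm_apply_le (hB.toEuclideanLin_inv_eigenvectorBasis hdet)
    (inv_nonneg.mpr hm.le)
    (fun i => (abs_of_pos (inv_pos.mpr (hm.trans_le (hle i)))).trans_le (inv_anti₀ hm (hle i))) v

end Matrix.IsHermitian

theorem stmt3_general {n : ℕ}
    (φ : EuclideanSpace ℝ (Fin n) → ℝ) (hφ : ContDiff ℝ 1 φ)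
    (L : ℝ) (hL : 0 < L)
    (hlip : ∀ a b, ‖gradient φ a - gradient φ b‖ ≤ L * ‖a - b‖)
    (B : Matrix (Fin n) (Fin n) ℝ) (hB : B.IsHermitian) (hPD : B.PosDef)
    (σlbB σubB σlb σub : ℝ) (h0 : 0 < σlbB)
    (heig : ∀ i, σlbB ≤ hB.eigenvalues i ∧ hB.eigenvalues i ≤ σubB)
    (hσlb : σlb = 1 / σubB) (hσub : σub = 1 / σlbB)
    (x g : EuclideanSpace ℝ (Fin n))
    (κ : ℝ) (hκ : 0 < κ) (θ : ℝ) (hθ : θ ∈ Set.Ioo (0 : ℝ) 1)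
    (α : ℝ) (hα0 : 0 < α)
    (hg : ‖g - gradient φ x‖ ≤ κ * α * ‖g‖)
    (hαub : α ≤ 2 * (1 - θ) * σlb / ((2 * κ + L * σub) * σub)) :
    φ (x - α • Matrix.toEuclideanLin B⁻¹ g) ≤
      φ x - α * θ * ⟪Matrix.toEuclideanLin B⁻¹ g, g⟫ := by
  set d := toEuclideanLin B⁻¹ g
  have hdet : IsUnit B.det := (isUnit_iff_isUnit_det B).mp hPD.isUnit
  have hdg : σlb * ‖g‖ ^ 2 ≤ ⟪d, g⟫ := by
    rw [hσlb, one_div]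
    exact hB.inv_mul_norm_sq_le_inner_toEuclideanLin_inv hdet
      (fun i => h0.trans_le (heig i).1) (fun i => (heig i).2) g
  have hd : ‖d‖ ≤ σub * ‖g‖ := by
    rw [hσub, one_div]
    exact hB.norm_toEuclideanLin_inv_le hdet h0 (fun i => (heig i).1) g
  have hgrad : ⟪g, d⟫ - ⟪gradient φ x, d⟫ ≤ κ * α * ‖g‖ * ‖d‖ :=
    calc ⟪g, d⟫ - ⟪gradient φ x, d⟫ = ⟪g - gradient φ x, d⟫ := (inner_sub_left _ _ _).symm
      _ ≤ ‖g - gradient φ x‖ * ‖d‖ := real_inner_le_norm _ _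
      _ ≤ κ * α * ‖g‖ * ‖d‖ := by gcongr
  have hσub0 : 0 < σub := by rw [hσub]; positivity
  have hstep : α * ((2 * κ + L * σub) * σub) ≤ 2 * (1 - θ) * σlb :=
    (le_div_iff₀ (by positivity)).mp hαub
  have hθ1 : 0 ≤ 1 - θ := sub_nonneg.mpr hθ.2.le
  have hdescent := le_add_inner_gradient_add_of_lipschitz_gradient
    (hφ.differentiable one_ne_zero) hlip x (-(α • d))
  rw [← sub_eq_add_neg, inner_neg_right, real_inner_smul_right, norm_neg, norm_smul,
    Real.norm_eq_abs, abs_of_pos hα0] at hdescent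
  calc φ (x - α • d) ≤ φ x + -(α * ⟪gradient φ x, d⟫) + L / 2 * (α * ‖d‖) ^ 2 := hdescent
    _ ≤ φ x - α * ⟪g, d⟫ + α ^ 2 * (κ * ‖g‖ * ‖d‖ + L / 2 * ‖d‖ ^ 2) := by
      linear_combination α * hgrad
    _ ≤ φ x - α * ⟪g, d⟫ + α ^ 2 * (κ * ‖g‖ * (σub * ‖g‖) + L / 2 * (σub * ‖g‖) ^ 2) := by
      gcongr
    _ = φ x - α * ⟪g, d⟫ + α / 2 * (α * ((2 * κ + L * σub) * σub)) * ‖g‖ ^ 2 := by ring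
    _ ≤ φ x - α * ⟪g, d⟫ + α / 2 * (2 * (1 - θ) * σlb) * ‖g‖ ^ 2 := by gcongr
    _ = φ x - α * ⟪g, d⟫ + α * (1 - θ) * (σlb * ‖g‖ ^ 2) := by ring
    _ ≤ φ x - α * ⟪g, d⟫ + α * (1 - θ) * ⟪d, g⟫ := by gcongr
    _ = φ x - α * θ * ⟪d, g⟫ := by rw [real_inner_comm]; ring

/-- If `‖g − ∇φ(x)‖ ≤ κ α ‖g‖` and
`0 < α ≤ 2(1 − θ)σlb / ((2κ + L σub) σub)`, then
`φ(x − α d) ≤ φ(x) − α θ ⟨d, g⟩` where `d := B⁻¹ g`. -/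
theorem stmt3 {n : ℕ} (hn : 1 ≤ n)
    (φ : EuclideanSpace ℝ (Fin n) → ℝ) (hφ : ContDiff ℝ 1 φ)
    (L : ℝ) (hL : 0 < L)
    (hlip : ∀ a b, ‖gradient φ a - gradient φ b‖ ≤ L * ‖a - b‖)
    (B : Matrix (Fin n) (Fin n) ℝ) (hB : B.IsHermitian) (hPD : B.PosDef)
    (σlbB σubB σlb σub : ℝ) (h0 : 0 < σlbB) (hord : σlbB ≤ σubB)
    (heig : ∀ i, σlbB ≤ hB.eigenvalues i ∧ hB.eigenvalues i ≤ σubB)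
    (hσlb : σlb = 1 / σubB) (hσub : σub = 1 / σlbB)
    (x g : EuclideanSpace ℝ (Fin n))
    (κ : ℝ) (hκ : 0 < κ) (θ : ℝ) (hθ : θ ∈ Set.Ioo (0 : ℝ) 1)
    (α : ℝ) (hα0 : 0 < α)
    (hg : ‖g - gradient φ x‖ ≤ κ * α * ‖g‖)
    (hαub : α ≤ 2 * (1 - θ) * σlb / ((2 * κ + L * σub) * σub)) :
    φ (x - α • Matrix.toEuclideanLin B⁻¹ g) ≤
      φ x - α * θ * ⟪Matrix.toEuclideanLin B⁻¹ g, g⟫ :=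
  stmt3_general φ hφ L hL hlip B hB hPD σlbB σubB σlb σub h0 heig hσlb hσub x g κ hκ θ hθ α hα0 hg
    hαub
end

section
/- Set K := σ_lb/σ_ub, let θ ∈ (0,1), κ > 0, η ∈ (0,1) with (1 − θ)(1 − η)K − η > 0, and define ᾱ := min{ 2(1 − θ)σ_lb / ((2κ + L σ_ub) σ_ub), 2((1 − θ)(1 − η)K − η)/(L σ_ub (1 − η)) }. Suppose ‖g − ∇φ(x)‖ ≤ max{ε_g, κ α ‖g‖} for some ε_g ≥ 0, that ‖∇φ(x)‖ > ε_g/η, and that 0 < α ≤ ᾱ. Let d := B⁻¹g, x⁺ := x − α d, and let f, f⁺ ∈ ℝ satisfy |f − φ(x)| + |f⁺ − φ(x⁺)| ≤ 2ε_f for some ε_f ≥ 0. Then the sufficient-decrease test holds: f⁺ ≤ f − α θ ⟨d, g⟩ + 2ε_f. -/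
/-!
The descent lemma for the `L`-smooth `φ` gives
`φ (x - α d) ≤ φ x - α ⟪∇φ x, d⟫ + L α² ‖d‖² / 2`, and replacing `∇φ x` by `g` costs at most
`α ‖g - ∇φ x‖ ‖d‖`. Since `d = B⁻¹ g`, the eigenvalue bounds give `σ_lb ‖g‖² ≤ ⟪d, g⟫` and
`‖d‖ ≤ σ_ub ‖g‖`, so the decrease test for `φ` follows from
`‖g - ∇φ x‖ ‖d‖ + L α ‖d‖² / 2 ≤ (1 - θ) σ_lb ‖g‖²`. Each term of the minimum defining `ᾱ`
secures this in one regime of the gradient error: the first when `‖g - ∇φ x‖ ≤ κ α ‖g‖`, the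
second when `‖g - ∇φ x‖ ≤ ε_g`, where `‖∇φ x‖ > ε_g / η` yields `(1 - η) ε_g ≤ η ‖g‖`.
Passing from `φ` to the noisy values `f, f⁺` costs `2 ε_f`.
-/

open scoped RealInnerProductSpace
open Matrix

section Descent

variable {E : Type*} [NormedAddCommGroup E] [InnerProductSpace ℝ E] [CompleteSpace E]
  {φ : E → ℝ}

theorem hasDerivAt_apply_add_smul (hφ : Differentiable ℝ φ) (x v : E) (t : ℝ) :
    HasDerivAt (fun s : ℝ => φ (x + s • v)) ⟪gradient φ (x + t • v), v⟫ t := by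
  have hline : HasDerivAt (fun s : ℝ => x + s • v) v t := by
    simpa using ((hasDerivAt_id t).smul_const v).const_add x
  simpa [InnerProductSpace.toDual_apply_apply, Function.comp_def] using
    (hφ _).hasGradientAt.hasFDerivAt.comp_hasDerivAt t hline

theorem apply_add_le_of_lipschitz_gradient (hφ : Differentiable ℝ φ) {L : ℝ}
    (hlip : ∀ a b, ‖gradient φ a - gradient φ b‖ ≤ L * ‖a - b‖) (x v : E) :
    φ (x + v) ≤ φ x + ⟪gradient φ x, v⟫ + L / 2 * ‖v‖ ^ 2 := by
  set ψ : ℝ → ℝ := fun t => φ (x + t • v) - t * ⟪gradient φ x, v⟫ - L / 2 * t ^ 2 * ‖v‖ ^ 2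
  have hψ : ∀ t, HasDerivAt ψ
      (⟪gradient φ (x + t • v) - gradient φ x, v⟫ - L * t * ‖v‖ ^ 2) t := fun t => by
    have := ((hasDerivAt_apply_add_smul hφ x v t).sub ((hasDerivAt_id t).mul_const
      ⟪gradient φ x, v⟫)).sub (((hasDerivAt_pow 2 t).const_mul (L / 2)).mul_const (‖v‖ ^ 2))
    exact this.congr_deriv (by simp only [inner_sub_left, Nat.cast_ofNat]; ring)
  have hanti : AntitoneOn ψ (Set.Icc 0 1) := by
    refine antitoneOn_of_hasDerivWithinAt_nonpos (convex_Icc 0 1)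
      (fun t _ => (hψ t).continuousAt.continuousWithinAt)
      (fun t _ => (hψ t).hasDerivWithinAt) fun t ht => ?_
    rw [interior_Icc] at ht
    have hgrad : ‖gradient φ (x + t • v) - gradient φ x‖ ≤ L * (t * ‖v‖) := by
      simpa [norm_smul, abs_of_pos ht.1] using hlip (x + t • v) x
    calc ⟪gradient φ (x + t • v) - gradient φ x, v⟫ - L * t * ‖v‖ ^ 2
        ≤ ‖gradient φ (x + t • v) - gradient φ x‖ * ‖v‖ - L * t * ‖v‖ ^ 2 := by
          gcongr; exact real_inner_le_norm _ _
      _ ≤ 0 := by nlinarith [mul_le_mul_of_nonneg_right hgrad (norm_nonneg v)]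
  have := hanti (Set.left_mem_Icc.2 zero_le_one) (Set.right_mem_Icc.2 zero_le_one) zero_le_one
  simp only [ψ, zero_smul, add_zero, one_smul, zero_mul, sub_zero, one_pow, mul_one,
    ne_eq, OfNat.ofNat_ne_zero, not_false_eq_true, zero_pow, mul_zero] at this
  linarith

theorem apply_sub_smul_le_of_inexact_gradient (hφ : Differentiable ℝ φ) {L : ℝ}
    (hlip : ∀ a b, ‖gradient φ a - gradient φ b‖ ≤ L * ‖a - b‖) {x g d : E} {α θ : ℝ}
    (hα : 0 ≤ α)
    (h : ‖g - gradient φ x‖ * ‖d‖ + L * α * ‖d‖ ^ 2 / 2 ≤ (1 - θ) * ⟪d, g⟫) :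
    φ (x - α • d) ≤ φ x - α * θ * ⟪d, g⟫ := by
  have hdesc := apply_add_le_of_lipschitz_gradient hφ hlip x (-(α • d))
  rw [← sub_eq_add_neg, inner_neg_right, real_inner_smul_right, norm_neg, norm_smul,
    Real.norm_of_nonneg hα] at hdesc
  have herr : ⟪g - gradient φ x, d⟫ ≤ ‖g - gradient φ x‖ * ‖d‖ := real_inner_le_norm _ _
  rw [inner_sub_left, real_inner_comm] at herr
  nlinarith [mul_le_mul_of_nonneg_left h hα]

end Descent

namespace LinearMap.IsSymmetric

variable {E ι : Type*} [NormedAddCommGroup E] [InnerProductSpace ℝ E] [Fintype ι]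
  {T : E →ₗ[ℝ] E} (hT : T.IsSymmetric) {e : OrthonormalBasis ι ℝ E} {μ : ι → ℝ}
  (he : ∀ i, T (e i) = μ i • e i)
include hT he

theorem inner_basis_apply (v : E) (i : ι) : ⟪e i, T v⟫ = μ i * ⟪e i, v⟫ := by
  rw [← hT, he, real_inner_smul_left]

theorem inner_apply_self_eq_sum (v : E) : ⟪T v, v⟫ = ∑ i, μ i * ⟪e i, v⟫ ^ 2 := by
  rw [← e.sum_inner_mul_inner]
  exact Finset.sum_congr rfl fun i _ => by rw [real_inner_comm (e i), inner_basis_apply hT he]; ring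

theorem norm_apply_sq_eq_sum (v : E) : ‖T v‖ ^ 2 = ∑ i, μ i ^ 2 * ⟪e i, v⟫ ^ 2 := by
  rw [← real_inner_self_eq_norm_sq, ← e.sum_inner_mul_inner]
  refine Finset.sum_congr rfl fun i _ => ?_
  rw [real_inner_comm (e i), inner_basis_apply hT he]; ring

theorem mul_norm_sq_le_inner_apply_self {a : ℝ} (ha : ∀ i, a ≤ μ i) (v : E) :
    a * ‖v‖ ^ 2 ≤ ⟪T v, v⟫ := by
  rw [inner_apply_self_eq_sum hT he, ← e.sum_sq_inner_right, Finset.mul_sum]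
  gcongr with i
  exact ha i

theorem norm_apply_sq_le_mul_inner_apply_self {b : ℝ} (hμ : ∀ i, 0 ≤ μ i ∧ μ i ≤ b) (v : E) :
    ‖T v‖ ^ 2 ≤ b * ⟪T v, v⟫ := by
  rw [inner_apply_self_eq_sum hT he, norm_apply_sq_eq_sum hT he, Finset.mul_sum]
  refine Finset.sum_le_sum fun i _ => ?_
  obtain ⟨hμ0, hμb⟩ := hμ i
  nlinarith [mul_nonneg (mul_nonneg (sub_nonneg.2 hμb) hμ0) (sq_nonneg ⟪e i, v⟫)]

theorem inv_mul_norm_sq_le_inner_of_apply_eq {b : ℝ} (hb : 0 < b)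
    (hμ : ∀ i, 0 ≤ μ i ∧ μ i ≤ b) {d g : E} (hd : T d = g) :
    b⁻¹ * ‖g‖ ^ 2 ≤ ⟪d, g⟫ := by
  rw [inv_mul_le_iff₀ hb, real_inner_comm, ← hd]
  exact norm_apply_sq_le_mul_inner_apply_self hT he hμ d

theorem norm_le_inv_mul_of_apply_eq {a : ℝ} (ha : 0 < a) (hμ : ∀ i, a ≤ μ i) {d g : E}
    (hd : T d = g) : ‖d‖ ≤ a⁻¹ * ‖g‖ := by
  rw [le_inv_mul_iff₀ ha]
  rcases (norm_nonneg d).eq_or_lt with h | h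
  · simp [← h]
  have : a * ‖d‖ * ‖d‖ ≤ ‖g‖ * ‖d‖ := by
    calc a * ‖d‖ * ‖d‖ = a * ‖d‖ ^ 2 := by ring
      _ ≤ ⟪T d, d⟫ := mul_norm_sq_le_inner_apply_self hT he hμ d
      _ ≤ ‖g‖ * ‖d‖ := hd ▸ real_inner_le_norm _ _
  exact le_of_mul_le_mul_right this h

end LinearMap.IsSymmetric

namespace Matrix

variable {n : Type*} [Fintype n] [DecidableEq n] {B : Matrix n n ℝ}

theorem toEuclideanLin_apply_toEuclideanLin_inv (hB : IsUnit B.det) (g : EuclideanSpace ℝ n) :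
    toEuclideanLin B (toEuclideanLin B⁻¹ g) = g := by
  simp [toLpLin_apply, mulVec_mulVec, mul_nonsing_inv _ hB]

theorem IsHermitian.toEuclideanLin_eigenvectorBasis (hB : B.IsHermitian) (i : n) :
    toEuclideanLin B (hB.eigenvectorBasis i) = hB.eigenvalues i • hB.eigenvectorBasis i := by
  simp [toLpLin_apply, hB.mulVec_eigenvectorBasis]

theorem PosDef.inv_mul_norm_sq_le_inner_toEuclideanLin_inv (hB : B.IsHermitian)
    (hPD : B.PosDef) {b : ℝ} (hb : 0 < b) (heig : ∀ i, hB.eigenvalues i ≤ b)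
    (g : EuclideanSpace ℝ n) :
    b⁻¹ * ‖g‖ ^ 2 ≤ ⟪toEuclideanLin B⁻¹ g, g⟫ :=
  (isSymmetric_toEuclideanLin_iff.2 hB).inv_mul_norm_sq_le_inner_of_apply_eq
    hB.toEuclideanLin_eigenvectorBasis hb (fun i => ⟨(hPD.eigenvalues_pos i).le, heig i⟩)
    (toEuclideanLin_apply_toEuclideanLin_inv ((isUnit_iff_isUnit_det B).1 hPD.isUnit) g)

theorem PosDef.norm_toEuclideanLin_inv_le (hB : B.IsHermitian) (hPD : B.PosDef) {a : ℝ}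
    (ha : 0 < a) (heig : ∀ i, a ≤ hB.eigenvalues i) (g : EuclideanSpace ℝ n) :
    ‖toEuclideanLin B⁻¹ g‖ ≤ a⁻¹ * ‖g‖ :=
  (isSymmetric_toEuclideanLin_iff.2 hB).norm_le_inv_mul_of_apply_eq
    hB.toEuclideanLin_eigenvectorBasis ha heig
    (toEuclideanLin_apply_toEuclideanLin_inv ((isUnit_iff_isUnit_det B).1 hPD.isUnit) g)

end Matrix

theorem mul_add_mul_sq_le_of_relative_error {κ α L σlb σub θ G D ε : ℝ} (hκ : 0 < κ)
    (hL : 0 ≤ L) (hσub : 0 < σub) (hα0 : 0 ≤ α)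
    (hα : α ≤ 2 * (1 - θ) * σlb / ((2 * κ + L * σub) * σub))
    (hε0 : 0 ≤ ε) (hε : ε ≤ κ * α * G) (hD0 : 0 ≤ D) (hD : D ≤ σub * G) :
    ε * D + L * α * D ^ 2 / 2 ≤ (1 - θ) * σlb * G ^ 2 := by
  rw [le_div_iff₀ (by positivity)] at hα
  have hεD : ε * D ≤ κ * α * G * (σub * G) := mul_le_mul hε hD hD0 (hε0.trans hε)
  have hD2 : L * α * D ^ 2 ≤ L * α * (σub * G) ^ 2 := by gcongr
  nlinarith [mul_le_mul_of_nonneg_right hα (sq_nonneg G)]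

theorem mul_add_mul_sq_le_of_absolute_error {εg η K α L σlb σub θ G D ε : ℝ} (hL : 0 < L)
    (hσub : 0 < σub) (hη : η < 1) (hα0 : 0 ≤ α)
    (hα : α ≤ 2 * ((1 - θ) * (1 - η) * K - η) / (L * σub * (1 - η))) (hK : K * σub = σlb)
    (hε0 : 0 ≤ ε) (hε : ε ≤ εg) (hεg : (1 - η) * εg ≤ η * G) (hD0 : 0 ≤ D)
    (hD : D ≤ σub * G) :
    ε * D + L * α * D ^ 2 / 2 ≤ (1 - θ) * σlb * G ^ 2 := by
  have h1η : 0 < 1 - η := by linarith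
  rw [le_div_iff₀ (by positivity)] at hα
  have hεD : ε * D ≤ εg * (σub * G) := mul_le_mul hε hD hD0 (hε0.trans hε)
  have hD2 : L * α * D ^ 2 ≤ L * α * (σub * G) ^ 2 := by gcongr
  refine le_of_mul_le_mul_left ?_ h1η
  calc (1 - η) * (ε * D + L * α * D ^ 2 / 2)
      ≤ (1 - η) * εg * (σub * G) + α * (L * σub * (1 - η)) * (σub * G ^ 2) / 2 := by
        nlinarith
    _ ≤ η * G * (σub * G) + 2 * ((1 - θ) * (1 - η) * K - η) * (σub * G ^ 2) / 2 := by
        gcongr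
        exact hD0.trans hD
    _ = (1 - η) * ((1 - θ) * (K * σub) * G ^ 2) := by ring
    _ = (1 - η) * ((1 - θ) * σlb * G ^ 2) := by rw [hK]

theorem stmt5_general {n : ℕ}
    (φ : EuclideanSpace ℝ (Fin n) → ℝ) (hφ : ContDiff ℝ 1 φ)
    (L : ℝ) (hL : 0 < L)
    (hlip : ∀ a b, ‖gradient φ a - gradient φ b‖ ≤ L * ‖a - b‖)
    (B : Matrix (Fin n) (Fin n) ℝ) (hB : B.IsHermitian) (hPD : B.PosDef)
    (σlbB σubB σlb σub K : ℝ) (h0 : 0 < σlbB) (hord : σlbB ≤ σubB)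
    (heig : ∀ i, σlbB ≤ hB.eigenvalues i ∧ hB.eigenvalues i ≤ σubB)
    (hσlb : σlb = 1 / σubB) (hσub : σub = 1 / σlbB) (hK : K = σlb / σub)
    (x g : EuclideanSpace ℝ (Fin n))
    (θ : ℝ) (hθ : θ ∈ Set.Ioo (0 : ℝ) 1)
    (κ : ℝ) (hκ : 0 < κ)
    (η : ℝ) (hη : η ∈ Set.Ioo (0 : ℝ) 1)
    (αbar : ℝ)
    (hαbar : αbar = min (2 * (1 - θ) * σlb / ((2 * κ + L * σub) * σub))
      (2 * ((1 - θ) * (1 - η) * K - η) / (L * σub * (1 - η))))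
    (εg : ℝ)
    (α : ℝ) (hα0 : 0 < α) (hαub : α ≤ αbar)
    (hg : ‖g - gradient φ x‖ ≤ max εg (κ * α * ‖g‖))
    (hgrad : εg / η < ‖gradient φ x‖)
    (εf : ℝ) (f fplus : ℝ)
    (hnoise : |f - φ x| + |fplus - φ (x - α • Matrix.toEuclideanLin B⁻¹ g)| ≤ 2 * εf) :
    fplus ≤ f - α * θ * ⟪Matrix.toEuclideanLin B⁻¹ g, g⟫ + 2 * εf := by
  obtain ⟨-, hθ1⟩ := hθ
  obtain ⟨hη0, hη1⟩ := hη
  have hσub0 : 0 < σub := hσub ▸ one_div_pos.2 h0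
  set d := toEuclideanLin B⁻¹ g
  have hdg : σlb * ‖g‖ ^ 2 ≤ ⟪d, g⟫ := by
    simpa [hσlb] using hPD.inv_mul_norm_sq_le_inner_toEuclideanLin_inv hB
      (h0.trans_le hord) (fun i => (heig i).2) g
  have hd : ‖d‖ ≤ σub * ‖g‖ := by
    simpa [hσub] using hPD.norm_toEuclideanLin_inv_le hB h0 (fun i => (heig i).1) g
  have herr : ‖g - gradient φ x‖ * ‖d‖ + L * α * ‖d‖ ^ 2 / 2 ≤ (1 - θ) * σlb * ‖g‖ ^ 2 := by
    rcases le_total εg (κ * α * ‖g‖) with hrel | habs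
    · exact mul_add_mul_sq_le_of_relative_error hκ hL.le hσub0 hα0.le
        (hαub.trans (hαbar ▸ min_le_left _ _)) (norm_nonneg _)
        (hg.trans_eq (max_eq_right hrel)) (norm_nonneg _) hd
    · have hεg : (1 - η) * εg ≤ η * ‖g‖ := by
        have := (div_lt_iff₀' hη0).1 (hgrad.trans_le (norm_le_norm_add_norm_sub g (gradient φ x)))
        nlinarith [hg.trans_eq (max_eq_left habs)]
      exact mul_add_mul_sq_le_of_absolute_error hL hσub0 hη1 hα0.le
        (hαub.trans (hαbar ▸ min_le_right _ _)) (by rw [hK]; field_simp) (norm_nonneg _)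
        (hg.trans_eq (max_eq_left habs)) hεg (norm_nonneg _) hd
  have hφx := apply_sub_smul_le_of_inexact_gradient (hφ.differentiable one_ne_zero) hlip hα0.le
    (herr.trans (by rw [mul_assoc]; gcongr))
  linarith [neg_abs_le (f - φ x), le_abs_self (fplus - φ (x - α • d))]

/-- Claim 4 of Proposition 4.4: a true iteration with step size at most `ᾱ`
satisfies the sufficient-decrease test `f⁺ ≤ f − α θ ⟨d, g⟩ + 2ε_f`. -/
theorem stmt5 {n : ℕ} (hn : 1 ≤ n)
    (φ : EuclideanSpace ℝ (Fin n) → ℝ) (hφ : ContDiff ℝ 1 φ)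
    (L : ℝ) (hL : 0 < L)
    (hlip : ∀ a b, ‖gradient φ a - gradient φ b‖ ≤ L * ‖a - b‖)
    (B : Matrix (Fin n) (Fin n) ℝ) (hB : B.IsHermitian) (hPD : B.PosDef)
    (σlbB σubB σlb σub K : ℝ) (h0 : 0 < σlbB) (hord : σlbB ≤ σubB)
    (heig : ∀ i, σlbB ≤ hB.eigenvalues i ∧ hB.eigenvalues i ≤ σubB)
    (hσlb : σlb = 1 / σubB) (hσub : σub = 1 / σlbB) (hK : K = σlb / σub)
    (x g : EuclideanSpace ℝ (Fin n))
    (θ : ℝ) (hθ : θ ∈ Set.Ioo (0 : ℝ) 1)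
    (κ : ℝ) (hκ : 0 < κ)
    (η : ℝ) (hη : η ∈ Set.Ioo (0 : ℝ) 1)
    (hpos : 0 < (1 - θ) * (1 - η) * K - η)
    (αbar : ℝ)
    (hαbar : αbar = min (2 * (1 - θ) * σlb / ((2 * κ + L * σub) * σub))
      (2 * ((1 - θ) * (1 - η) * K - η) / (L * σub * (1 - η))))
    (εg : ℝ) (hεg : 0 ≤ εg)
    (α : ℝ) (hα0 : 0 < α) (hαub : α ≤ αbar)
    (hg : ‖g - gradient φ x‖ ≤ max εg (κ * α * ‖g‖))
    (hgrad : εg / η < ‖gradient φ x‖)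
    (εf : ℝ) (hεf : 0 ≤ εf) (f fplus : ℝ)
    (hnoise : |f - φ x| + |fplus - φ (x - α • Matrix.toEuclideanLin B⁻¹ g)| ≤ 2 * εf) :
    fplus ≤ f - α * θ * ⟪Matrix.toEuclideanLin B⁻¹ g, g⟫ + 2 * εf :=
  stmt5_general φ hφ L hL hlip B hB hPD σlbB σubB σlb σub K h0 hord heig hσlb hσub hK x g θ hθ κ hκ
    η hη αbar hαbar εg α hα0 hαub hg hgrad εf f fplus hnoise
end

section
/- Suppose ‖g − ∇φ(x)‖ ≤ τ ‖g‖ for some τ ≥ 0, let d := B⁻¹g, α > 0, θ ∈ (0,1), x⁺ := x − α d, and let f, f⁺ ∈ ℝ satisfy |f − φ(x)| + |f⁺ − φ(x⁺)| ≤ 2ε_f for some ε_f ≥ 0. If f⁺ ≤ f − α θ ⟨d, g⟩ + 2ε_f, then φ(x⁺) − φ(x) ≤ −(α θ σ_lb/(1 + τ)²) ‖∇φ(x)‖² + 4ε_f. -/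
open scoped RealInnerProductSpace
open Matrix

/-!
Two noisy function values cost at most `4 ε_f` in the sufficient-decrease test, so the true
decrease is at least `α θ ⟪B⁻¹ g, g⟫ - 4 ε_f`. Expanding `g` in an orthonormal eigenbasis of `B`
gives `⟪B⁻¹ g, g⟫ ≥ ‖g‖² / σ_ub^B`, and the relative gradient error gives
`‖∇φ(x)‖ ≤ (1 + τ) ‖g‖`.
-/

namespace Matrix.IsHermitian

variable {ι : Type*} [Fintype ι] [DecidableEq ι] {A : Matrix ι ι ℝ}

theorem toEuclideanLin_inv_eigenvectorBasis_s6 (hA : A.IsHermitian) (hdet : IsUnit A.det) (i : ι) :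
    toEuclideanLin A⁻¹ (hA.eigenvectorBasis i) =
      (hA.eigenvalues i)⁻¹ • hA.eigenvectorBasis i := by
  have : Invertible A := A.invertibleOfIsUnitDet hdet
  set v := hA.eigenvectorBasis i
  have hv : (v : ι → ℝ) = hA.eigenvalues i • A⁻¹ *ᵥ v := by
    rw [← mulVec_smul, ← hA.mulVec_eigenvectorBasis, inv_mulVec_eq_vec rfl]
  have hne : hA.eigenvalues i ≠ 0 := by
    intro h
    have hv0 : v = 0 := by ext j; simpa [h] using congrFun hv j
    have hv1 : ‖v‖ = 1 := hA.eigenvectorBasis.orthonormal.1 i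
    simp [hv0] at hv1
  ext j
  simp [congrFun hv j, inv_mul_cancel_left₀ hne]

theorem inner_toEuclideanLin_inv_self (hA : A.IsHermitian) (hdet : IsUnit A.det)
    (x : EuclideanSpace ℝ ι) :
    ⟪toEuclideanLin A⁻¹ x, x⟫ = ∑ i, (hA.eigenvalues i)⁻¹ * ⟪hA.eigenvectorBasis i, x⟫ ^ 2 := by
  have hsymm : (toEuclideanLin A⁻¹).IsSymmetric := isSymmetric_toEuclideanLin_iff.mpr hA.inv
  rw [← hA.eigenvectorBasis.sum_inner_mul_inner]
  refine Finset.sum_congr rfl fun i _ => ?_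
  rw [hsymm, hA.toEuclideanLin_inv_eigenvectorBasis_s6 hdet, real_inner_smul_right,
    real_inner_comm x]
  ring

end Matrix.IsHermitian

namespace Matrix.PosDef

variable {ι : Type*} [Fintype ι] [DecidableEq ι] {A : Matrix ι ι ℝ}

theorem inv_mul_norm_sq_le_inner_toEuclideanLin_inv_s6 (hA : A.PosDef) {c : ℝ}
    (hc : ∀ i, hA.1.eigenvalues i ≤ c) (x : EuclideanSpace ℝ ι) :
    c⁻¹ * ‖x‖ ^ 2 ≤ ⟪toEuclideanLin A⁻¹ x, x⟫ := by
  rw [hA.1.inner_toEuclideanLin_inv_self hA.det_pos.ne'.isUnit,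
    ← hA.1.eigenvectorBasis.sum_sq_inner_right, Finset.mul_sum]
  gcongr with i
  exacts [hA.eigenvalues_pos i, hc i]

end Matrix.PosDef

theorem norm_le_one_add_mul_of_norm_sub_le {E : Type*} [SeminormedAddCommGroup E] {u v : E}
    {τ : ℝ} (h : ‖u - v‖ ≤ τ * ‖u‖) : ‖v‖ ≤ (1 + τ) * ‖u‖ := by
  linarith [norm_le_norm_add_norm_sub u v]

theorem stmt6_general {n : ℕ}
    (φ : EuclideanSpace ℝ (Fin n) → ℝ)
    (B : Matrix (Fin n) (Fin n) ℝ) (hB : B.IsHermitian) (hPD : B.PosDef)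
    (σlbB σubB σlb : ℝ) (h0 : 0 < σlbB) (hord : σlbB ≤ σubB)
    (heig : ∀ i, σlbB ≤ hB.eigenvalues i ∧ hB.eigenvalues i ≤ σubB)
    (hσlb : σlb = 1 / σubB)
    (x g : EuclideanSpace ℝ (Fin n))
    (τ : ℝ) (hτ : 0 ≤ τ)
    (hg : ‖g - gradient φ x‖ ≤ τ * ‖g‖)
    (α : ℝ) (hα0 : 0 < α) (θ : ℝ) (hθ : θ ∈ Set.Ioo (0 : ℝ) 1)
    (εf : ℝ) (f fplus : ℝ)
    (hnoise : |f - φ x| + |fplus - φ (x - α • Matrix.toEuclideanLin B⁻¹ g)| ≤ 2 * εf)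
    (hsucc : fplus ≤ f - α * θ * ⟪Matrix.toEuclideanLin B⁻¹ g, g⟫ + 2 * εf) :
    φ (x - α • Matrix.toEuclideanLin B⁻¹ g) - φ x ≤
      -(α * θ * σlb / (1 + τ) ^ 2) * ‖gradient φ x‖ ^ 2 + 4 * εf := by
  set d := toEuclideanLin B⁻¹ g
  have hσlb0 : 0 ≤ σlb := by
    rw [hσlb]
    exact one_div_nonneg.mpr (h0.trans_le hord).le
  have hdecrease : φ (x - α • d) - φ x ≤ -(α * θ * ⟪d, g⟫) + 4 * εf := by
    linarith [le_abs_self (f - φ x), neg_abs_le (fplus - φ (x - α • d))]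
  have hcurv : σlb * ‖g‖ ^ 2 ≤ ⟪d, g⟫ := by
    rw [hσlb, one_div]
    exact hPD.inv_mul_norm_sq_le_inner_toEuclideanLin_inv_s6 (fun i => (heig i).2) g
  have hgrad : ‖gradient φ x‖ ^ 2 ≤ (1 + τ) ^ 2 * ‖g‖ ^ 2 := by
    rw [← mul_pow]
    gcongr
    exact norm_le_one_add_mul_of_norm_sub_le hg
  have hkey : σlb / (1 + τ) ^ 2 * ‖gradient φ x‖ ^ 2 ≤ ⟪d, g⟫ := by
    rw [div_mul_eq_mul_div, div_le_iff₀ (by positivity)]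
    nlinarith [mul_le_mul_of_nonneg_left hgrad hσlb0]
  have hαθ : 0 ≤ α * θ := (mul_pos hα0 hθ.1).le
  calc φ (x - α • d) - φ x ≤ -(α * θ * ⟪d, g⟫) + 4 * εf := hdecrease
    _ ≤ -(α * θ * (σlb / (1 + τ) ^ 2 * ‖gradient φ x‖ ^ 2)) + 4 * εf := by gcongr
    _ = -(α * θ * σlb / (1 + τ) ^ 2) * ‖gradient φ x‖ ^ 2 + 4 * εf := by ring

/-- case 1 of Claim 3 in the proof of Proposition 4.4: if
`‖g − ∇φ(x)‖ ≤ τ ‖g‖` and the sufficient-decrease test holds, then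
`φ(x⁺) − φ(x) ≤ −(α θ σlb/(1 + τ)²) ‖∇φ(x)‖² + 4ε_f`. -/
theorem stmt6 {n : ℕ} (hn : 1 ≤ n)
    (φ : EuclideanSpace ℝ (Fin n) → ℝ) (hφ : ContDiff ℝ 1 φ)
    (B : Matrix (Fin n) (Fin n) ℝ) (hB : B.IsHermitian) (hPD : B.PosDef)
    (σlbB σubB σlb σub : ℝ) (h0 : 0 < σlbB) (hord : σlbB ≤ σubB)
    (heig : ∀ i, σlbB ≤ hB.eigenvalues i ∧ hB.eigenvalues i ≤ σubB)
    (hσlb : σlb = 1 / σubB) (hσub : σub = 1 / σlbB)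
    (x g : EuclideanSpace ℝ (Fin n))
    (τ : ℝ) (hτ : 0 ≤ τ)
    (hg : ‖g - gradient φ x‖ ≤ τ * ‖g‖)
    (α : ℝ) (hα0 : 0 < α) (θ : ℝ) (hθ : θ ∈ Set.Ioo (0 : ℝ) 1)
    (εf : ℝ) (hεf : 0 ≤ εf) (f fplus : ℝ)
    (hnoise : |f - φ x| + |fplus - φ (x - α • Matrix.toEuclideanLin B⁻¹ g)| ≤ 2 * εf)
    (hsucc : fplus ≤ f - α * θ * ⟪Matrix.toEuclideanLin B⁻¹ g, g⟫ + 2 * εf) :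
    φ (x - α • Matrix.toEuclideanLin B⁻¹ g) - φ x ≤
      -(α * θ * σlb / (1 + τ) ^ 2) * ‖gradient φ x‖ ^ 2 + 4 * εf :=
  stmt6_general φ B hB hPD σlbB σubB σlb h0 hord heig hσlb x g τ hτ hg α hα0 θ hθ εf f fplus hnoise
    hsucc
end

section
/- Suppose ‖g − ∇φ(x)‖ ≤ η ‖∇φ(x)‖ for some η ∈ (0,1), let d := B⁻¹g, α > 0, θ ∈ (0,1), x⁺ := x − α d, and let f, f⁺ ∈ ℝ satisfy |f − φ(x)| + |f⁺ − φ(x⁺)| ≤ 2ε_f for some ε_f ≥ 0. If f⁺ ≤ f − α θ ⟨d, g⟩ + 2ε_f, then φ(x⁺) − φ(x) ≤ −α θ σ_lb (1 − η)² ‖∇φ(x)‖² + 4ε_f. -/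
open scoped RealInnerProductSpace
open Matrix

lemma eigApply {n : ℕ} (B : Matrix (Fin n) (Fin n) ℝ) (hB : B.IsHermitian) (j : Fin n) :
    Matrix.toEuclideanLin B (hB.eigenvectorBasis j) =
      hB.eigenvalues j • hB.eigenvectorBasis j := by
  have h := hB.mulVec_eigenvectorBasis j
  rw [toEuclideanLin_apply]
  ext i
  simpa using congrFun h i

lemma quadLower {n : ℕ} (B : Matrix (Fin n) (Fin n) ℝ) (hB : B.IsHermitian) (hPD : B.PosDef)
    (σubB : ℝ) (heig : ∀ i, hB.eigenvalues i ≤ σubB) (w : EuclideanSpace ℝ (Fin n)) :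
    ‖Matrix.toEuclideanLin B w‖ ^ 2 ≤ σubB * ⟪w, Matrix.toEuclideanLin B w⟫ := by
  set e := hB.eigenvectorBasis with he
  set c : Fin n → ℝ := fun i => ⟪e i, w⟫ with hc
  set lam := hB.eigenvalues with hlam
  have hw : w = ∑ i, c i • e i := (e.sum_repr' w).symm
  have hT : Matrix.toEuclideanLin B w = ∑ i, (lam i * c i) • e i := by
    conv_lhs => rw [hw]
    rw [map_sum]
    refine Finset.sum_congr rfl fun i _ => ?_
    rw [_root_.map_smul, eigApply B hB i, smul_smul, mul_comm]
  have horth := e.orthonormal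
  have h1 : ⟪w, Matrix.toEuclideanLin B w⟫ = ∑ i, lam i * c i ^ 2 := by
    rw [hT]
    conv_lhs => rw [hw]
    rw [horth.inner_sum]
    refine Finset.sum_congr rfl fun i _ => ?_
    simp [sq]; ring
  have h2 : ‖Matrix.toEuclideanLin B w‖ ^ 2 = ∑ i, (lam i * c i) ^ 2 := by
    rw [← real_inner_self_eq_norm_sq]
    conv_lhs => rw [hT]
    rw [horth.inner_sum]
    refine Finset.sum_congr rfl fun i _ => ?_
    simp [sq]
  rw [h1, h2, Finset.mul_sum]
  refine Finset.sum_le_sum fun i _ => ?_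
  have hpos : 0 < lam i := hPD.eigenvalues_pos i
  have : (lam i * c i) ^ 2 = lam i * (lam i * c i ^ 2) := by ring
  rw [this]
  have : lam i * c i ^ 2 ≥ 0 := mul_nonneg hpos.le (sq_nonneg _)
  nlinarith [heig i]

/-- case 2 of Claim 3 in the proof of Proposition 4.4: if
`‖g − ∇φ(x)‖ ≤ η ‖∇φ(x)‖` and the sufficient-decrease test holds, then
`φ(x⁺) − φ(x) ≤ −α θ σlb (1 − η)² ‖∇φ(x)‖² + 4ε_f`. -/
theorem stmt7 {n : ℕ} (hn : 1 ≤ n)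
    (φ : EuclideanSpace ℝ (Fin n) → ℝ) (hφ : ContDiff ℝ 1 φ)
    (B : Matrix (Fin n) (Fin n) ℝ) (hB : B.IsHermitian) (hPD : B.PosDef)
    (σlbB σubB σlb σub : ℝ) (h0 : 0 < σlbB) (hord : σlbB ≤ σubB)
    (heig : ∀ i, σlbB ≤ hB.eigenvalues i ∧ hB.eigenvalues i ≤ σubB)
    (hσlb : σlb = 1 / σubB) (hσub : σub = 1 / σlbB)
    (x g : EuclideanSpace ℝ (Fin n))
    (η : ℝ) (hη : η ∈ Set.Ioo (0 : ℝ) 1)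
    (hg : ‖g - gradient φ x‖ ≤ η * ‖gradient φ x‖)
    (α : ℝ) (hα0 : 0 < α) (θ : ℝ) (hθ : θ ∈ Set.Ioo (0 : ℝ) 1)
    (εf : ℝ) (hεf : 0 ≤ εf) (f fplus : ℝ)
    (hnoise : |f - φ x| + |fplus - φ (x - α • Matrix.toEuclideanLin B⁻¹ g)| ≤ 2 * εf)
    (hsucc : fplus ≤ f - α * θ * ⟪Matrix.toEuclideanLin B⁻¹ g, g⟫ + 2 * εf) :
    φ (x - α • Matrix.toEuclideanLin B⁻¹ g) - φ x ≤
      -(α * θ * σlb * (1 - η) ^ 2) * ‖gradient φ x‖ ^ 2 + 4 * εf := by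
  obtain ⟨hη0, hη1⟩ := hη
  obtain ⟨hθ0, hθ1⟩ := hθ
  set d := Matrix.toEuclideanLin B⁻¹ g with hd
  set xp := x - α • d with hxp
  have hubB : 0 < σubB := lt_of_lt_of_le h0 hord
  -- B applied to d gives back g
  have hTg : Matrix.toEuclideanLin B d = g := by
    rw [hd, toEuclideanLin_apply, toEuclideanLin_apply]
    ext i
    simp [mulVec_mulVec, Matrix.mul_nonsing_inv B hPD.det_pos.ne'.isUnit]
  -- lower bound on inner product
  have hq := quadLower B hB hPD σubB (fun i => (heig i).2) d
  rw [hTg] at hq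
  have hdg : σlb * ‖g‖ ^ 2 ≤ ⟪d, g⟫ := by
    rw [hσlb]
    rw [div_mul_eq_mul_div, div_le_iff₀ hubB] at *
    linarith [hq]
  -- gradient norm bound
  have hgrad : (1 - η) * ‖gradient φ x‖ ≤ ‖g‖ := by
    have h1 : ‖gradient φ x‖ - ‖g‖ ≤ ‖g - gradient φ x‖ := by
      rw [norm_sub_rev]
      exact norm_sub_norm_le _ _
    linarith
  have hgsq : (1 - η) ^ 2 * ‖gradient φ x‖ ^ 2 ≤ ‖g‖ ^ 2 := by
    have h1 : 0 ≤ (1 - η) * ‖gradient φ x‖ :=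
      mul_nonneg (by linarith) (norm_nonneg _)
    nlinarith [hgrad]
  -- noise bounds
  have hb1 : φ xp - fplus ≤ |fplus - φ xp| := by rw [abs_sub_comm]; exact le_abs_self _
  have hb2 : f - φ x ≤ |f - φ x| := le_abs_self _
  have hσlb0 : 0 ≤ σlb := by rw [hσlb]; positivity
  have hαθ : 0 < α * θ := mul_pos hα0 hθ0
  have key : σlb * (1 - η) ^ 2 * ‖gradient φ x‖ ^ 2 ≤ ⟪d, g⟫ := by
    calc σlb * (1 - η) ^ 2 * ‖gradient φ x‖ ^ 2 ≤ σlb * ‖g‖ ^ 2 := by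
          rw [mul_assoc]; exact mul_le_mul_of_nonneg_left hgsq hσlb0
      _ ≤ ⟪d, g⟫ := hdg
  nlinarith [mul_le_mul_of_nonneg_left key hαθ.le, hnoise, hsucc, hb1, hb2]
end

section
/- Suppose φ is β-strongly convex with β > 0 and attains its global minimum value φ* . If φ(x) − φ* > ε_g²/(2βη²) for some ε_g ≥ 0 and some η ∈ (0,1), and ‖g − ∇φ(x)‖ ≤ ε_g, then ‖g − ∇φ(x)‖ ≤ η‖∇φ(x)‖ and ‖g‖ ≥ (1 − η)‖∇φ(x)‖. -/
open scoped RealInnerProductSpace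

/-- if `φ` is `β`-strongly convex attaining its global minimum value `φ*`,
`φ(x) − φ* > ε_g²/(2βη²)` and `‖g − ∇φ(x)‖ ≤ ε_g`, then
`‖g − ∇φ(x)‖ ≤ η ‖∇φ(x)‖` and `‖g‖ ≥ (1 − η) ‖∇φ(x)‖`. -/
theorem stmt9 {n : ℕ} (hn : 1 ≤ n)
    (φ : EuclideanSpace ℝ (Fin n) → ℝ) (hφ : ContDiff ℝ 1 φ)
    (β : ℝ) (hβ : 0 < β)
    (hsc : ∀ a b : EuclideanSpace ℝ (Fin n),
      φ b + ⟪gradient φ b, a - b⟫ + β / 2 * ‖a - b‖ ^ 2 ≤ φ a)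
    (φstar : ℝ) (hlb : ∀ y, φstar ≤ φ y) (hatt : ∃ z, φ z = φstar)
    (x g : EuclideanSpace ℝ (Fin n))
    (εg : ℝ) (hεg : 0 ≤ εg) (η : ℝ) (hη : η ∈ Set.Ioo (0 : ℝ) 1)
    (hgap : εg ^ 2 / (2 * β * η ^ 2) < φ x - φstar)
    (hg : ‖g - gradient φ x‖ ≤ εg) :
    ‖g - gradient φ x‖ ≤ η * ‖gradient φ x‖ ∧
      (1 - η) * ‖gradient φ x‖ ≤ ‖g‖ := by
  obtain ⟨hη0, hη1⟩ := hη
  set v := gradient φ x with hv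
  -- PL inequality: φ x - φstar ≤ ‖v‖² / (2β)
  have hPL : φ x - φstar ≤ ‖v‖ ^ 2 / (2 * β) := by
    obtain ⟨z, hz⟩ := hatt
    have h := hsc z x
    rw [hz] at h
    have hsq : (0:ℝ) ≤ β / 2 * ‖(z - x) + β⁻¹ • v‖ ^ 2 := by positivity
    have expand : β / 2 * ‖(z - x) + β⁻¹ • v‖ ^ 2 =
        β / 2 * ‖z - x‖ ^ 2 + ⟪v, z - x⟫ + ‖v‖ ^ 2 / (2 * β) := by
      rw [norm_add_sq_real, real_inner_smul_right, norm_smul, real_inner_comm,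
        Real.norm_eq_abs, abs_of_pos (inv_pos.mpr hβ)]
      field_simp
    rw [expand] at hsq
    linarith
  -- εg ≤ η ‖v‖
  have hkey : εg ≤ η * ‖v‖ := by
    have h2 : εg ^ 2 < η ^ 2 * ‖v‖ ^ 2 := by
      have hpos : 0 < 2 * β * η ^ 2 := by positivity
      rw [div_lt_iff₀ hpos] at hgap
      have hPL' : (φ x - φstar) * (2 * β) ≤ ‖v‖ ^ 2 := by
        rw [← le_div_iff₀ (by positivity)]; exact hPL
      nlinarith [mul_le_mul_of_nonneg_right hPL' (sq_nonneg η)]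
    have h2' : εg ^ 2 < (η * ‖v‖) ^ 2 := by rw [mul_pow]; exact h2
    exact (lt_of_pow_lt_pow_left₀ 2 (by positivity) h2').le
  have h1 : ‖g - v‖ ≤ η * ‖v‖ := le_trans hg hkey
  refine ⟨h1, ?_⟩
  have := norm_sub_norm_le g v
  have h3 : ‖v‖ - ‖g‖ ≤ ‖g - v‖ := by
    have := norm_sub_norm_le v g
    rwa [norm_sub_rev] at this
  linarith
end
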